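/- Every rational function f ∈ K(z) of degree ≥ 1 is Lipschitz continuous on (P^1(K), chordal metric) with Lipschitz constant 1/|Res(H)|, where H = (H_0, H_1) is a normalized homogeneous lift of f (coefficients have maximum absolute value 1) and Res(H) is the homogeneous resultant; in particular f is Lipschitz with some finite constant L ≥ 1. -/

import Mathlib

/-- The chordal metric on homogeneous representatives. -/
noncomputable def chord {K : Type*} [NormedField K] (p q : K × K) : ℝ :=
  ‖p.1 * q.2 - p.2 * q.1‖ / (max ‖p.1‖ ‖p.2‖ * max ‖q.1‖ ‖q.2‖)

/-- The homogeneous map `K² → K²` determined by the pair of degree-`d`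
homogeneous polynomials with coefficient vectors `a` and `b`:
`H(x,y) = (∑ k a_k x^k y^(d-k), ∑ k b_k x^k y^(d-k))`. -/
noncomputable def homLift {K : Type*} [Field K] (d : ℕ)
    (a b : Fin (d + 1) → K) (p : K × K) : K × K :=
  (∑ k : Fin (d + 1), a k * p.1 ^ (k : ℕ) * p.2 ^ (d - (k : ℕ)),
   ∑ k : Fin (d + 1), b k * p.1 ^ (k : ℕ) * p.2 ^ (d - (k : ℕ)))

/-- The homogeneous resultant of the pair of degree-`d` forms with coefficient
vectors `a` and `b`, as the determinant of the `2d × 2d` Sylvester matrix. -/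
noncomputable def homResultant {K : Type*} [Field K] (d : ℕ)
    (a b : Fin (d + 1) → K) : K :=
  Matrix.det (fun i j : Fin (2 * d) =>
    if hi : (i : ℕ) < d then
      (if h : (i : ℕ) ≤ (j : ℕ) ∧ (j : ℕ) ≤ (i : ℕ) + d then
        a ⟨(j : ℕ) - (i : ℕ), by omega⟩ else 0)
    else
      (if h : (i : ℕ) - d ≤ (j : ℕ) ∧ (j : ℕ) ≤ (i : ℕ) - d + d then
        b ⟨(j : ℕ) - ((i : ℕ) - d), by omega⟩ else 0))

/-!
Normalize representatives so that `‖p‖ = ‖q‖ = 1` for the sup norm on `K²`; the chordal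
distance is then `|p ∧ q|`. Two ultrametric estimates finish the proof.

* Cramer's rule for the Sylvester matrix writes `Res(H) · p₁ⁱ p₂^(2d-1-i)` as a combination of
  `H₀(p)` and `H₁(p)` with coefficients in the unit ball; one of these monomials has norm `1`,
  so `|Res(H)| ≤ ‖H(p)‖`.
* For a form `F = Σ cₖ xᵏ y^(d-k)` one has
  `F(p) q₂ᵈ - F(q) p₂ᵈ = Σ cₖ (p₂q₂)^(d-k) ((p₁q₂)ᵏ - (q₁p₂)ᵏ)`, and `xᵏ - yᵏ` is a multiple
  of `x - y`, so this is at most `|p ∧ q|` (likewise with the first coordinates). Eliminating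
  `F(q)` between the two components of `H` gives `|H(p) ∧ H(q)| ≤ |p ∧ q| ‖H(q)‖`.

Hence `chord(H p, H q) ≤ |p ∧ q| / ‖H(p)‖ ≤ |Res(H)|⁻¹ chord(p, q)`. Finally `Res(H) ≠ 0`:
`H₀` and `H₁` have no common zero, so over the algebraically closed `K` their dehomogenizations
are coprime and do not both drop degree, which is exactly the non-vanishing of the resultant.
-/

open Polynomial

section BinaryForm

variable {R : Type*} [CommRing R]

/-- Coefficients of `g` above degree `n` are dropped. -/
def Polynomial.evalHomogenized (n : ℕ) (g : R[X]) (p : R × R) : R :=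
  ∑ k ∈ Finset.range (n + 1), g.coeff k * p.1 ^ k * p.2 ^ (n - k)

lemma Polynomial.eval_eq_evalHomogenized {g : R[X]} {n : ℕ} (hg : g.natDegree ≤ n) (t : R) :
    g.eval t = g.evalHomogenized n (t, 1) := by
  simp [evalHomogenized, eval_eq_sum_range' (Nat.lt_succ_of_le hg)]

lemma Polynomial.evalHomogenized_one_zero (n : ℕ) (g : R[X]) :
    g.evalHomogenized n (1, 0) = g.coeff n := by
  rw [evalHomogenized, Finset.sum_range_succ, Finset.sum_eq_zero fun k hk => ?_]
  · simp
  · simp [zero_pow (Nat.sub_ne_zero_of_lt (Finset.mem_range.mp hk))]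

def wedge (p q : R × R) : R := p.1 * q.2 - p.2 * q.1

lemma wedge_smul_left (c : R) (p q : R × R) : wedge (c • p) q = c * wedge p q := by
  simp only [wedge, Prod.smul_fst, Prod.smul_snd, smul_eq_mul]; ring

lemma wedge_smul_right (c : R) (p q : R × R) : wedge p (c • q) = c * wedge p q := by
  simp only [wedge, Prod.smul_fst, Prod.smul_snd, smul_eq_mul]; ring

end BinaryForm

section HomLift

variable {F : Type*} [Field F]

lemma homLift_eq_evalHomogenized [DecidableEq F] (d : ℕ) (a b : Fin (d + 1) → F) (p : F × F) :
    homLift d a b p =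
      ((ofFn (d + 1) a).evalHomogenized d p, (ofFn (d + 1) b).evalHomogenized d p) := by
  simp only [homLift, evalHomogenized, ← Fin.sum_univ_eq_sum_range
    (fun k => (ofFn (d + 1) _).coeff k * p.1 ^ k * p.2 ^ (d - k)),
    ofFn_coeff_eq_val_of_lt _ (Fin.is_lt _), Fin.eta]

lemma homLift_smul (d : ℕ) (a b : Fin (d + 1) → F) (c : F) (p : F × F) :
    homLift d a b (c • p) = c ^ d • homLift d a b p := by
  have hterm : ∀ (e : Fin (d + 1) → F) (k : Fin (d + 1)),
      e k * (c * p.1) ^ (k : ℕ) * (c * p.2) ^ (d - k) =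
        c ^ d * (e k * p.1 ^ (k : ℕ) * p.2 ^ (d - k)) :=
    fun e k => by rw [← pow_mul_pow_sub c (Nat.lt_succ_iff.mp k.is_lt)]; ring
  simp only [homLift, Prod.smul_fst, Prod.smul_snd, smul_eq_mul, Prod.smul_mk, Finset.mul_sum,
    hterm]

lemma homResultant_eq_resultant [DecidableEq F] (d : ℕ) (a b : Fin (d + 1) → F) :
    homResultant d a b = resultant (ofFn (d + 1) b) (ofFn (d + 1) a) d d := by
  rw [resultant, ← Matrix.det_transpose,
    ← Matrix.det_submatrix_equiv_self (finCongr (two_mul d))]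
  unfold homResultant
  congr 1
  ext i j
  simp only [Matrix.submatrix_apply, Matrix.transpose_apply, finCongr_apply, sylvester,
    Matrix.of_apply]
  by_cases hi : (i : ℕ) < d
  · rw [show Fin.cast (two_mul d) i = Fin.castAdd d ⟨i, hi⟩ from rfl, Fin.addCases_left, dif_pos hi]
    simp only [Fin.val_cast, Set.mem_Icc]
    split_ifs with h
    · rw [ofFn_coeff_eq_val_of_lt]
    · rfl
  · rw [show Fin.cast (two_mul d) i = Fin.natAdd d ⟨i - d, by omega⟩ from Fin.ext (by simp; omega),
      Fin.addCases_right, dif_neg hi]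
    simp only [Fin.val_cast, Set.mem_Icc]
    split_ifs with h
    · rw [ofFn_coeff_eq_val_of_lt]
    · rfl

lemma Polynomial.resultant_ne_zero_of_isCoprime {f g : F[X]} {m n : ℕ} (hf : f.natDegree ≤ m)
    (hg : g.natDegree ≤ n) (hfg : IsCoprime f g) (hlead : f.coeff m ≠ 0 ∨ g.coeff n ≠ 0) :
    resultant f g m n ≠ 0 := by
  obtain ⟨k, rfl⟩ := Nat.exists_eq_add_of_le hf
  obtain ⟨l, rfl⟩ := Nat.exists_eq_add_of_le hg
  rw [resultant_add_left_deg _ _ _ _ _ le_rfl, resultant_add_right_deg _ _ _ _ _ le_rfl]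
  have hres : resultant f g ≠ 0 := fun h => (resultant_eq_zero_iff.mp h).2 hfg
  refine mul_ne_zero (mul_ne_zero (by simp) ?_) (mul_ne_zero ?_ hres)
  · rcases k.eq_zero_or_pos with rfl | hk
    · simp
    exact pow_ne_zero _ <| hlead.resolve_left <| not_not.mpr <|
      coeff_eq_zero_of_natDegree_lt (by omega)
  · rcases l.eq_zero_or_pos with rfl | hl
    · simp
    have hfk := hlead.resolve_right <| not_not.mpr <| coeff_eq_zero_of_natDegree_lt (by omega)
    obtain rfl : k = 0 := by
      by_contra hk
      exact hfk (coeff_eq_zero_of_natDegree_lt (by omega))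
    exact pow_ne_zero _ hfk

lemma homResultant_ne_zero [IsAlgClosed F] {d : ℕ} {a b : Fin (d + 1) → F}
    (hnondeg : ∀ p : F × F, p ≠ 0 → homLift d a b p ≠ 0) : homResultant d a b ≠ 0 := by
  classical
  have hdeg : ∀ e : Fin (d + 1) → F, (ofFn (d + 1) e).natDegree ≤ d := fun e =>
    Nat.lt_succ_iff.mp (ofFn_natDegree_lt (Nat.succ_pos d) e)
  rw [homResultant_eq_resultant]
  refine resultant_ne_zero_of_isCoprime (hdeg b) (hdeg a)
    ((isCoprime_iff_aeval_ne_zero_of_isAlgClosed (k := F) F _ _).mpr fun t => ?_) ?_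
  · have h := hnondeg (t, 1) (by simp)
    rw [homLift_eq_evalHomogenized, ← eval_eq_evalHomogenized (hdeg a),
      ← eval_eq_evalHomogenized (hdeg b), Ne, Prod.mk_eq_zero, not_and_or] at h
    simpa only [coe_aeval_eq_eval, or_comm] using h
  · have h := hnondeg (1, 0) (by simp)
    rw [homLift_eq_evalHomogenized, evalHomogenized_one_zero, evalHomogenized_one_zero, Ne,
      Prod.mk_eq_zero, not_and_or] at h
    exact h.symm

end HomLift

lemma Finset.sum_range_ite_mem_Icc {M : Type*} [AddCommMonoid M] (f : ℕ → M) {j n N : ℕ}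
    (h : j + n < N) :
    ∑ i ∈ Finset.range N, (if i ∈ Set.Icc j (j + n) then f i else 0) =
      ∑ k ∈ Finset.range (n + 1), f (j + k) := by
  rw [← Finset.sum_filter, show (Finset.range N).filter (· ∈ Set.Icc j (j + n)) =
      Finset.Ico j (j + (n + 1)) by ext; simp; omega, Finset.sum_Ico_eq_sum_range,
    Nat.add_sub_cancel_left]

section SylvesterVecMul

variable {R : Type*} [CommRing R]

lemma sum_monomial_mul_coeff_window (c : R[X]) (p : R × R) {j n N : ℕ} (h : j + n < N) :
    ∑ i ∈ Finset.range N, p.1 ^ i * p.2 ^ (N - 1 - i) *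
        (if i ∈ Set.Icc j (j + n) then c.coeff (i - j) else 0) =
      p.1 ^ j * p.2 ^ (N - 1 - n - j) * c.evalHomogenized n p := by
  simp only [mul_ite, mul_zero]
  rw [Finset.sum_range_ite_mem_Icc _ h, evalHomogenized, Finset.mul_sum]
  refine Finset.sum_congr rfl fun k hk => ?_
  have hkn : k ≤ n := Nat.lt_succ_iff.mp (Finset.mem_range.mp hk)
  rw [Nat.add_sub_cancel_left, pow_add, show N - 1 - (j + k) = N - 1 - n - j + (n - k) by omega,
    pow_add]
  ring

lemma vecMul_sylvester_castAdd (f g : R[X]) {m n : ℕ} (p : R × R) (j : Fin m) :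
    Matrix.vecMul (fun i : Fin (m + n) => p.1 ^ (i : ℕ) * p.2 ^ (m + n - 1 - i))
        (sylvester f g m n) (Fin.castAdd n j) =
      p.1 ^ (j : ℕ) * p.2 ^ (m + n - 1 - n - j) * g.evalHomogenized n p := by
  rw [Matrix.vecMul, dotProduct, ← sum_monomial_mul_coeff_window _ _ (by omega),
    ← Fin.sum_univ_eq_sum_range]
  simp [sylvester]

lemma vecMul_sylvester_natAdd (f g : R[X]) {m n : ℕ} (p : R × R) (j : Fin n) :
    Matrix.vecMul (fun i : Fin (m + n) => p.1 ^ (i : ℕ) * p.2 ^ (m + n - 1 - i))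
        (sylvester f g m n) (Fin.natAdd m j) =
      p.1 ^ (j : ℕ) * p.2 ^ (m + n - 1 - m - j) * f.evalHomogenized m p := by
  rw [Matrix.vecMul, dotProduct, ← sum_monomial_mul_coeff_window _ _ (by omega),
    ← Fin.sum_univ_eq_sum_range]
  simp [sylvester]

end SylvesterVecMul

section NormedField

variable {K : Type*} [NormedField K]

lemma chord_eq (p q : K × K) : chord p q = ‖wedge p q‖ / (‖p‖ * ‖q‖) := by
  rw [chord, Prod.norm_def, Prod.norm_def, wedge]

lemma chord_smul_left {c : K} (hc : c ≠ 0) (p q : K × K) : chord (c • p) q = chord p q := by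
  rw [chord_eq, chord_eq, wedge_smul_left, norm_mul, norm_smul, mul_assoc,
    mul_div_mul_left _ _ (norm_ne_zero_iff.mpr hc)]

lemma chord_smul_right {c : K} (hc : c ≠ 0) (p q : K × K) : chord p (c • q) = chord p q := by
  rw [chord_eq, chord_eq, wedge_smul_right, norm_mul, norm_smul, mul_left_comm,
    mul_div_mul_left _ _ (norm_ne_zero_iff.mpr hc)]

lemma exists_smul_norm_eq_one {p : K × K} (hp : p ≠ 0) : ∃ c : K, c ≠ 0 ∧ ‖c • p‖ = 1 := by
  obtain ⟨x, hx⟩ : ∃ x : K, ‖x‖ = ‖p‖ := by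
    rcases max_choice ‖p.1‖ ‖p.2‖ with h | h
    · exact ⟨p.1, by rw [Prod.norm_def, h]⟩
    · exact ⟨p.2, by rw [Prod.norm_def, h]⟩
  have hx0 : ‖x‖ ≠ 0 := hx ▸ norm_ne_zero_iff.mpr hp
  exact ⟨x⁻¹, inv_ne_zero (norm_ne_zero_iff.mp hx0),
    by rw [norm_smul, norm_inv, ← hx, inv_mul_cancel₀ hx0]⟩

lemma norm_mul_le_one {x y : K} (hx : ‖x‖ ≤ 1) (hy : ‖y‖ ≤ 1) : ‖x * y‖ ≤ 1 := by
  rw [norm_mul]; exact mul_le_one₀ hx (norm_nonneg _) hy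

lemma norm_pow_le_one {x : K} (hx : ‖x‖ ≤ 1) (n : ℕ) : ‖x ^ n‖ ≤ 1 := by
  rw [norm_pow]; exact pow_le_one₀ (norm_nonneg _) hx

lemma norm_coeff_ofFn_le_one [DecidableEq K] {n : ℕ} {e : Fin n → K} (he : ∀ i, ‖e i‖ ≤ 1)
    (k : ℕ) : ‖(ofFn n e).coeff k‖ ≤ 1 := by
  rcases lt_or_ge k n with hk | hk
  · rw [ofFn_coeff_eq_val_of_lt _ hk]; exact he _
  · simp [ofFn_coeff_eq_zero_of_ge _ hk]

lemma norm_sylvester_apply_le_one {f g : K[X]} (hf : ∀ k, ‖f.coeff k‖ ≤ 1)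
    (hg : ∀ k, ‖g.coeff k‖ ≤ 1) (m n : ℕ) (i j : Fin (m + n)) :
    ‖sylvester f g m n i j‖ ≤ 1 := by
  induction j using Fin.addCases <;>
  · simp only [sylvester, Matrix.of_apply, Fin.addCases_left, Fin.addCases_right]
    split_ifs <;> simp [hf, hg]

end NormedField

section Ultrametric

variable {K : Type*} [NormedField K] [IsUltrametricDist K]

lemma IsUltrametricDist.norm_sub_le_max (x y : K) : ‖x - y‖ ≤ max ‖x‖ ‖y‖ := by
  simpa only [sub_eq_add_neg, norm_neg] using IsUltrametricDist.norm_add_le_max x (-y)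

lemma norm_pow_sub_pow_le {x y : K} (hx : ‖x‖ ≤ 1) (hy : ‖y‖ ≤ 1) (n : ℕ) :
    ‖x ^ n - y ^ n‖ ≤ ‖x - y‖ := by
  rw [← geom_sum₂_mul, norm_mul]
  refine mul_le_of_le_one_left (norm_nonneg _) ?_
  exact IsUltrametricDist.norm_sum_le_of_forall_le_of_nonneg zero_le_one fun i _ =>
    norm_mul_le_one (norm_pow_le_one hx i) (norm_pow_le_one hy _)

lemma norm_mul_pow_mul_pow_sub_pow_le {c z x y : K} (hc : ‖c‖ ≤ 1) (hz : ‖z‖ ≤ 1)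
    (hx : ‖x‖ ≤ 1) (hy : ‖y‖ ≤ 1) (m n : ℕ) : ‖c * z ^ m * (x ^ n - y ^ n)‖ ≤ ‖x - y‖ := by
  rw [norm_mul]
  exact (mul_le_mul_of_nonneg_left (norm_pow_sub_pow_le hx hy n) (norm_nonneg _)).trans
    (mul_le_of_le_one_left (norm_nonneg _) (norm_mul_le_one hc (norm_pow_le_one hz m)))

lemma norm_det_le_one {n : Type*} [Fintype n] [DecidableEq n] {M : Matrix n n K}
    (hM : ∀ i j, ‖M i j‖ ≤ 1) : ‖M.det‖ ≤ 1 := by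
  rw [Matrix.det_apply']
  refine IsUltrametricDist.norm_sum_le_of_forall_le_of_nonneg zero_le_one fun σ _ => ?_
  rw [norm_mul, norm_prod]
  exact mul_le_one₀ (IsUltrametricDist.norm_intCast_le_one K _) (by positivity)
    (Finset.prod_le_one (fun _ _ => norm_nonneg _) fun i _ => hM _ _)

lemma norm_det_mul_le_of_norm_vecMul_le {n : Type*} [Fintype n] [DecidableEq n]
    {M : Matrix n n K} (hM : ∀ i j, ‖M i j‖ ≤ 1) (v : n → K) {C : ℝ} (hC : 0 ≤ C)
    (hv : ∀ j, ‖Matrix.vecMul v M j‖ ≤ C) (i : n) : ‖M.det * v i‖ ≤ C := by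
  have hcramer : M.det • v = Matrix.vecMul (Matrix.vecMul v M) M.adjugate := by
    rw [Matrix.vecMul_vecMul, Matrix.mul_adjugate, Matrix.vecMul_smul, Matrix.vecMul_one]
  rw [← smul_eq_mul, ← Pi.smul_apply, hcramer, Matrix.vecMul, dotProduct]
  refine IsUltrametricDist.norm_sum_le_of_forall_le_of_nonneg hC fun j _ => ?_
  have hadj : ‖M.adjugate j i‖ ≤ 1 := by
    rw [Matrix.adjugate_apply]
    refine norm_det_le_one fun k l => ?_
    rw [Matrix.updateRow_apply]
    split_ifs
    · rw [Pi.single_apply]; split_ifs <;> simp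
    · exact hM _ _
  rw [norm_mul]
  exact (mul_le_mul_of_nonneg_right (hv j) (norm_nonneg _)).trans (mul_le_of_le_one_right hC hadj)

lemma norm_resultant_le {f g : K[X]} (hf : ∀ k, ‖f.coeff k‖ ≤ 1) (hg : ∀ k, ‖g.coeff k‖ ≤ 1)
    {m n : ℕ} (hmn : 0 < m + n) {p : K × K} (hp : ‖p‖ = 1) :
    ‖resultant f g m n‖ ≤ max ‖f.evalHomogenized m p‖ ‖g.evalHomogenized n p‖ := by
  have hmono : ∀ s t : ℕ, ‖p.1 ^ s * p.2 ^ t‖ ≤ 1 := fun s t =>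
    norm_mul_le_one (norm_pow_le_one (hp ▸ norm_fst_le p) s)
      (norm_pow_le_one (hp ▸ norm_snd_le p) t)
  have hcol : ∀ j, ‖Matrix.vecMul (fun i : Fin (m + n) => p.1 ^ (i : ℕ) * p.2 ^ (m + n - 1 - i))
      (sylvester f g m n) j‖ ≤ max ‖f.evalHomogenized m p‖ ‖g.evalHomogenized n p‖ := by
    intro j
    induction j using Fin.addCases with
    | left j =>
      rw [vecMul_sylvester_castAdd, norm_mul]
      exact (mul_le_of_le_one_left (norm_nonneg _) (hmono _ _)).trans (le_max_right _ _)
    | right j =>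
      rw [vecMul_sylvester_natAdd, norm_mul]
      exact (mul_le_of_le_one_left (norm_nonneg _) (hmono _ _)).trans (le_max_left _ _)
  have hcramer := norm_det_mul_le_of_norm_vecMul_le (norm_sylvester_apply_le_one hf hg m n) _
    ((norm_nonneg _).trans (le_max_left _ _)) hcol
  rw [resultant]
  rcases max_choice ‖p.1‖ ‖p.2‖ with h | h <;> rw [Prod.norm_def, h] at hp
  · simpa [hp] using hcramer ⟨m + n - 1, by omega⟩
  · simpa [hp] using hcramer ⟨0, hmn⟩

lemma norm_evalHomogenized_mul_pow_snd_sub_le {g : K[X]} (hg : ∀ k, ‖g.coeff k‖ ≤ 1)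
    {p q : K × K} (hp : ‖p‖ ≤ 1) (hq : ‖q‖ ≤ 1) (n : ℕ) :
    ‖g.evalHomogenized n p * q.2 ^ n - g.evalHomogenized n q * p.2 ^ n‖ ≤ ‖wedge p q‖ := by
  have hsum : g.evalHomogenized n p * q.2 ^ n - g.evalHomogenized n q * p.2 ^ n =
      ∑ k ∈ Finset.range (n + 1),
        g.coeff k * (p.2 * q.2) ^ (n - k) * ((p.1 * q.2) ^ k - (q.1 * p.2) ^ k) := by
    simp only [evalHomogenized, Finset.sum_mul, ← Finset.sum_sub_distrib]
    refine Finset.sum_congr rfl fun k hk => ?_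
    have hkn : k ≤ n := Nat.lt_succ_iff.mp (Finset.mem_range.mp hk)
    rw [← pow_mul_pow_sub q.2 hkn, ← pow_mul_pow_sub p.2 hkn]
    ring
  have hp1 := (norm_fst_le p).trans hp
  have hp2 := (norm_snd_le p).trans hp
  have hq1 := (norm_fst_le q).trans hq
  have hq2 := (norm_snd_le q).trans hq
  have hwedge : ‖p.1 * q.2 - q.1 * p.2‖ = ‖wedge p q‖ := by rw [wedge, mul_comm q.1]
  rw [hsum, ← hwedge]
  exact IsUltrametricDist.norm_sum_le_of_forall_le_of_nonneg (norm_nonneg _) fun k _ =>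
    norm_mul_pow_mul_pow_sub_pow_le (hg k) (norm_mul_le_one hp2 hq2) (norm_mul_le_one hp1 hq2)
      (norm_mul_le_one hq1 hp2) _ _

lemma norm_evalHomogenized_mul_pow_fst_sub_le {g : K[X]} (hg : ∀ k, ‖g.coeff k‖ ≤ 1)
    {p q : K × K} (hp : ‖p‖ ≤ 1) (hq : ‖q‖ ≤ 1) (n : ℕ) :
    ‖g.evalHomogenized n p * q.1 ^ n - g.evalHomogenized n q * p.1 ^ n‖ ≤ ‖wedge p q‖ := by
  have hsum : g.evalHomogenized n p * q.1 ^ n - g.evalHomogenized n q * p.1 ^ n =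
      ∑ k ∈ Finset.range (n + 1),
        g.coeff k * (p.1 * q.1) ^ k * ((p.2 * q.1) ^ (n - k) - (q.2 * p.1) ^ (n - k)) := by
    simp only [evalHomogenized, Finset.sum_mul, ← Finset.sum_sub_distrib]
    refine Finset.sum_congr rfl fun k hk => ?_
    have hkn : k ≤ n := Nat.lt_succ_iff.mp (Finset.mem_range.mp hk)
    rw [← pow_mul_pow_sub q.1 hkn, ← pow_mul_pow_sub p.1 hkn]
    ring
  have hp1 := (norm_fst_le p).trans hp
  have hp2 := (norm_snd_le p).trans hp
  have hq1 := (norm_fst_le q).trans hq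
  have hq2 := (norm_snd_le q).trans hq
  have hwedge : ‖p.2 * q.1 - q.2 * p.1‖ = ‖wedge p q‖ := by
    rw [wedge, ← norm_neg]; ring_nf
  rw [hsum, ← hwedge]
  exact IsUltrametricDist.norm_sum_le_of_forall_le_of_nonneg (norm_nonneg _) fun k _ =>
    norm_mul_pow_mul_pow_sub_pow_le (hg k) (norm_mul_le_one hp1 hq1) (norm_mul_le_one hp2 hq1)
      (norm_mul_le_one hq2 hp1) _ _

lemma norm_wedge_le_of_norm_mul_sub_le {u v : K × K} {τ σ : K} (hτ : ‖τ‖ = 1) {w : ℝ}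
    (h₁ : ‖u.1 * τ - v.1 * σ‖ ≤ w) (h₂ : ‖u.2 * τ - v.2 * σ‖ ≤ w) :
    ‖wedge u v‖ ≤ w * ‖v‖ := by
  have hid : wedge u v * τ = v.2 * (u.1 * τ - v.1 * σ) - v.1 * (u.2 * τ - v.2 * σ) := by
    rw [wedge]; ring
  rw [← mul_one ‖wedge u v‖, ← hτ, ← norm_mul, hid, Prod.norm_def, mul_max_of_nonneg _ _
    ((norm_nonneg _).trans h₁), max_comm]
  refine (IsUltrametricDist.norm_sub_le_max _ _).trans (max_le_max ?_ ?_) <;>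
    rw [norm_mul, mul_comm] <;> gcongr

end Ultrametric

section HomLiftNorm

variable {K : Type*} [NormedField K] [IsUltrametricDist K] {d : ℕ} {a b : Fin (d + 1) → K}

lemma norm_homResultant_le_one (hcoeff : ∀ k, ‖a k‖ ≤ 1 ∧ ‖b k‖ ≤ 1) :
    ‖homResultant d a b‖ ≤ 1 := by
  classical
  rw [homResultant_eq_resultant, resultant]
  exact norm_det_le_one (norm_sylvester_apply_le_one
    (norm_coeff_ofFn_le_one fun k => (hcoeff k).2)
    (norm_coeff_ofFn_le_one fun k => (hcoeff k).1) _ _)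

lemma norm_homResultant_le_norm_homLift (hd : 1 ≤ d) (hcoeff : ∀ k, ‖a k‖ ≤ 1 ∧ ‖b k‖ ≤ 1)
    {p : K × K} (hp : ‖p‖ = 1) : ‖homResultant d a b‖ ≤ ‖homLift d a b p‖ := by
  classical
  rw [homResultant_eq_resultant, homLift_eq_evalHomogenized, Prod.norm_def, max_comm]
  exact norm_resultant_le (norm_coeff_ofFn_le_one fun k => (hcoeff k).2)
    (norm_coeff_ofFn_le_one fun k => (hcoeff k).1) (by omega) hp

lemma norm_wedge_homLift_le (hcoeff : ∀ k, ‖a k‖ ≤ 1 ∧ ‖b k‖ ≤ 1) {p q : K × K}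
    (hp : ‖p‖ ≤ 1) (hq : ‖q‖ = 1) :
    ‖wedge (homLift d a b p) (homLift d a b q)‖ ≤ ‖wedge p q‖ * ‖homLift d a b q‖ := by
  classical
  have ha := norm_coeff_ofFn_le_one fun k => (hcoeff k).1
  have hb := norm_coeff_ofFn_le_one fun k => (hcoeff k).2
  simp only [homLift_eq_evalHomogenized]
  have hq₁ : ‖q‖ ≤ 1 := hq.le
  rcases max_choice ‖q.1‖ ‖q.2‖ with h | h <;> rw [Prod.norm_def, h] at hq
  · exact norm_wedge_le_of_norm_mul_sub_le (by rw [norm_pow, hq, one_pow])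
      (norm_evalHomogenized_mul_pow_fst_sub_le ha hp hq₁ d)
      (norm_evalHomogenized_mul_pow_fst_sub_le hb hp hq₁ d)
  · exact norm_wedge_le_of_norm_mul_sub_le (by rw [norm_pow, hq, one_pow])
      (norm_evalHomogenized_mul_pow_snd_sub_le ha hp hq₁ d)
      (norm_evalHomogenized_mul_pow_snd_sub_le hb hp hq₁ d)

lemma chord_homLift_le_of_norm_eq_one (hd : 1 ≤ d) (hcoeff : ∀ k, ‖a k‖ ≤ 1 ∧ ‖b k‖ ≤ 1)
    (hR : homResultant d a b ≠ 0) {p q : K × K} (hp : ‖p‖ = 1) (hq : ‖q‖ = 1) :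
    chord (homLift d a b p) (homLift d a b q) ≤ ‖homResultant d a b‖⁻¹ * chord p q := by
  have hR₀ : 0 < ‖homResultant d a b‖ := norm_pos_iff.mpr hR
  have hHp := norm_homResultant_le_norm_homLift hd hcoeff hp
  have hHq := hR₀.trans_le (norm_homResultant_le_norm_homLift hd hcoeff hq)
  rw [chord_eq, chord_eq, hp, hq, one_mul, div_one, ← div_eq_inv_mul]
  calc ‖wedge (homLift d a b p) (homLift d a b q)‖ / (‖homLift d a b p‖ * ‖homLift d a b q‖)
      ≤ ‖wedge p q‖ * ‖homLift d a b q‖ / (‖homLift d a b p‖ * ‖homLift d a b q‖) := by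
        gcongr; exact norm_wedge_homLift_le hcoeff hp.le hq
    _ = ‖wedge p q‖ / ‖homLift d a b p‖ := mul_div_mul_right _ _ hHq.ne'
    _ ≤ ‖wedge p q‖ / ‖homResultant d a b‖ := by gcongr

end HomLiftNorm

theorem rational_map_lipschitz_general {K : Type*} [NontriviallyNormedField K]
    [IsAlgClosed K] (hna : IsNonarchimedean (norm : K → ℝ))
    (d : ℕ) (hd : 1 ≤ d) (a b : Fin (d + 1) → K)
    (hcoeff : ∀ k, ‖a k‖ ≤ 1 ∧ ‖b k‖ ≤ 1)
    (hnondeg : ∀ p : K × K, p ≠ 0 → homLift d a b p ≠ 0) :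
    homResultant d a b ≠ 0 ∧
      (∀ p q : K × K, p ≠ 0 → q ≠ 0 →
        chord (homLift d a b p) (homLift d a b q) ≤
          ‖homResultant d a b‖⁻¹ * chord p q) ∧
      ∃ L : ℝ, 1 ≤ L ∧ ∀ p q : K × K, p ≠ 0 → q ≠ 0 →
        chord (homLift d a b p) (homLift d a b q) ≤ L * chord p q := by
  have := IsUltrametricDist.isUltrametricDist_of_isNonarchimedean_norm hna
  have hR := homResultant_ne_zero hnondeg
  have hlip : ∀ p q : K × K, p ≠ 0 → q ≠ 0 →
      chord (homLift d a b p) (homLift d a b q) ≤ ‖homResultant d a b‖⁻¹ * chord p q := by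
    intro p q hp hq
    obtain ⟨s, hs, hsp⟩ := exists_smul_norm_eq_one hp
    obtain ⟨t, ht, htq⟩ := exists_smul_norm_eq_one hq
    have h := chord_homLift_le_of_norm_eq_one hd hcoeff hR hsp htq
    rwa [homLift_smul, homLift_smul, chord_smul_left (pow_ne_zero d hs),
      chord_smul_right (pow_ne_zero d ht), chord_smul_left hs, chord_smul_right ht] at h
  exact ⟨hR, hlip, _, one_le_inv₀ (norm_pos_iff.mpr hR) |>.mpr (norm_homResultant_le_one hcoeff),
    hlip⟩

/-- A rational function of degree `d ≥ 1` on `P¹(K)`, given by a normalized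
non-degenerate homogeneous lift `H = (H₀, H₁)` (all coefficients of absolute
value at most `1`, some of absolute value exactly `1`), is Lipschitz for the
chordal metric with constant `1/|Res(H)|`; in particular it is Lipschitz with
some finite constant `L ≥ 1`. -/
theorem rational_map_lipschitz {K : Type*} [NontriviallyNormedField K]
    [IsAlgClosed K] [CompleteSpace K] (hna : IsNonarchimedean (norm : K → ℝ))
    (d : ℕ) (hd : 1 ≤ d) (a b : Fin (d + 1) → K)
    (hcoeff : ∀ k, ‖a k‖ ≤ 1 ∧ ‖b k‖ ≤ 1)
    (hnormed : (∃ k, ‖a k‖ = 1) ∨ ∃ k, ‖b k‖ = 1)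
    (hnondeg : ∀ p : K × K, p ≠ 0 → homLift d a b p ≠ 0) :
    homResultant d a b ≠ 0 ∧
      (∀ p q : K × K, p ≠ 0 → q ≠ 0 →
        chord (homLift d a b p) (homLift d a b q) ≤
          ‖homResultant d a b‖⁻¹ * chord p q) ∧
      ∃ L : ℝ, 1 ≤ L ∧ ∀ p q : K × K, p ≠ 0 → q ≠ 0 →
        chord (homLift d a b p) (homLift d a b q) ≤ L * chord p q :=
  rational_map_lipschitz_general hna d hd a b hcoeff hnondeg
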